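/- If a nonzero product vector z = z₁ ⊗ ⋯ ⊗ z_{p+1} in (ℂ²)^{⊗(p+1)} satisfies ⟨v ⊗ e₀, z⟩ = 0 for every v in a UPB S₁ of (ℂ²)^{⊗p} and ⟨w ⊗ e₁, z⟩ = 0 for every w in a UPB S₂ of (ℂ²)^{⊗p}, then z_{p+1} = 0, a contradiction; hence no such z exists. -/
import Mathlib


noncomputable section
open scoped Classical

/-- The product vector `v₁ ⊗ ⋯ ⊗ v_p` in `(ℂ²)^{⊗p}`, modelled as a function on
multi-indices. -/
def prodVec {p : ℕ} (v : Fin p → Fin 2 → ℂ) : (Fin p → Fin 2) → ℂ :=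
  fun x => ∏ j, v j (x j)

/-- The standard inner product on `(ℂ²)^{⊗p}` (conjugate-linear in the first slot). -/
def ip {p : ℕ} (a b : (Fin p → Fin 2) → ℂ) : ℂ :=
  ∑ x : Fin p → Fin 2, starRingEnd ℂ (a x) * b x

/-- `S` is an unextendible product basis of `(ℂ²)^{⊗p}`. -/
def IsUPB (p : ℕ) (S : Finset ((Fin p → Fin 2) → ℂ)) : Prop :=
  (∀ a ∈ S, ∃ v : Fin p → Fin 2 → ℂ, (∀ j, v j ≠ 0) ∧ a = prodVec v) ∧
  (∀ a ∈ S, ∀ b ∈ S, a ≠ b → ip a b = 0) ∧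
  ¬ ∃ z : Fin p → Fin 2 → ℂ, (∀ j, z j ≠ 0) ∧ ∀ a ∈ S, ip a (prodVec z) = 0

/-- Append one extra qubit in state `c` to a vector `a` of `(ℂ²)^{⊗p}`. -/
def tensAdd {p : ℕ} (a : (Fin p → Fin 2) → ℂ) (c : Fin 2 → ℂ) :
    (Fin (p + 1) → Fin 2) → ℂ :=
  fun x => a (fun j => x j.castSucc) * c (x (Fin.last p))

/-- The standard basis vector `|0⟩` of `ℂ²`. -/
def e0 : Fin 2 → ℂ := fun i => if i = 0 then 1 else 0

/-- The standard basis vector `|1⟩` of `ℂ²`. -/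
def e1 : Fin 2 → ℂ := fun i => if i = 1 then 1 else 0

lemma ip_tensAdd {p : ℕ} (a : (Fin p → Fin 2) → ℂ) (c : Fin 2 → ℂ)
    (z : Fin (p + 1) → Fin 2 → ℂ) :
    ip (tensAdd a c) (prodVec z) =
      ip a (prodVec (fun j => z j.castSucc)) *
        (∑ i : Fin 2, starRingEnd ℂ (c i) * z (Fin.last p) i) := by
  rw [ip, ip, ← Equiv.sum_comp (Fin.snocEquiv (fun _ => Fin 2))]
  rw [Finset.sum_mul_sum]
  rw [Fintype.sum_prod_type_right]
  apply Finset.sum_congr rfl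
  intro x _
  apply Finset.sum_congr rfl
  intro i _
  simp only [Fin.snocEquiv_apply, tensAdd, prodVec, Fin.prod_univ_castSucc]
  simp [Fin.snoc_castSucc, Fin.snoc_last, mul_comm, mul_assoc, mul_left_comm]

theorem stmt_10 (p : ℕ) (S₁ S₂ : Finset ((Fin p → Fin 2) → ℂ))
    (h₁ : IsUPB p S₁) (h₂ : IsUPB p S₂)
    (z : Fin (p + 1) → Fin 2 → ℂ) (hz : ∀ j, z j ≠ 0)
    (horth₁ : ∀ a ∈ S₁, ip (tensAdd a e0) (prodVec z) = 0)
    (horth₂ : ∀ a ∈ S₂, ip (tensAdd a e1) (prodVec z) = 0) :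
    False := by
  set z' : Fin p → Fin 2 → ℂ := fun j => z j.castSucc with hz'
  have hz'ne : ∀ j, z' j ≠ 0 := fun j => hz j.castSucc
  have he0 : (∑ i : Fin 2, starRingEnd ℂ (e0 i) * z (Fin.last p) i) = z (Fin.last p) 0 := by
    simp [Fin.sum_univ_two, e0]
  have he1 : (∑ i : Fin 2, starRingEnd ℂ (e1 i) * z (Fin.last p) i) = z (Fin.last p) 1 := by
    simp [Fin.sum_univ_two, e1]
  obtain ⟨-, -, hU1⟩ := h₁
  obtain ⟨-, -, hU2⟩ := h₂
  push_neg at hU1 hU2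
  obtain ⟨a, ha, hane⟩ := hU1 z' hz'ne
  obtain ⟨b, hb, hbne⟩ := hU2 z' hz'ne
  have h0 : z (Fin.last p) 0 = 0 := by
    have := horth₁ a ha
    rw [ip_tensAdd, he0, mul_eq_zero] at this
    tauto
  have h1 : z (Fin.last p) 1 = 0 := by
    have := horth₂ b hb
    rw [ip_tensAdd, he1, mul_eq_zero] at this
    tauto
  apply hz (Fin.last p)
  ext i
  fin_cases i <;> assumption

end
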